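/- For any n ≥ 1, define for 0 ≤ i ≤ n−1 the quantity d_i = Σ_{k=0}^{n-1} ((-1)^{k+1}/(k+2))·(C(n-i, k-i) − C(i+1, n-k)); then d_i = −d_{n-1-i} for all 0 ≤ i ≤ n−1. -/
import Mathlib


/-- Binomial coefficient `C(m, j)`, zero when `j < 0` or `j > m`. -/
def ch (m j : ℤ) : ℤ := if 0 ≤ j ∧ j ≤ m then (m.toNat).choose j.toNat else 0

/-- `r n k i = C(n-i, k-i) - C(i+1, n-k)`. -/
def r (n k i : ℤ) : ℤ := ch (n - i) (k - i) - ch (i + 1) (n - k)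

/-- `d n i = ∑_{k=0}^{n-1} ((-1)^{k+1}/(k+2)) · r_{k,i}`, the change of the
Euler-characteristic local formula under an `(n-1)`-dimensional
bistellar `i`-move. -/
noncomputable def d (n : ℕ) (i : ℤ) : ℝ :=
  ∑ k ∈ Finset.range n, ((-1 : ℝ) ^ (k + 1) / ((k : ℝ) + 2)) * (r n k i : ℝ)

lemma ch_symm (m j : ℤ) : ch m j = ch m (m - j) := by
  unfold ch
  by_cases h : 0 ≤ j ∧ j ≤ m
  · rw [if_pos h, if_pos ⟨by omega, by omega⟩]
    have ht : (m - j).toNat = m.toNat - j.toNat := by omega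
    rw [ht, Nat.choose_symm (by omega)]
  · rw [if_neg h, if_neg (by omega)]

lemma r_flip (n k i : ℤ) : r n k (n - 1 - i) = - r n k i := by
  unfold r
  have e1 : n - (n - 1 - i) = i + 1 := by ring
  have e2 : (n - 1 - i) + 1 = n - i := by ring
  rw [e1, e2, ch_symm (i + 1) (k - (n - 1 - i)), ch_symm (n - i) (n - k)]
  have e3 : (i + 1) - (k - (n - 1 - i)) = n - k := by ring
  have e4 : (n - i) - (n - k) = k - i := by ring
  rw [e3, e4]
  ring

/-- `d_i = -d_{n-1-i}` for all `0 ≤ i ≤ n-1`. -/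
theorem stmt17 (n : ℕ) (hn : 1 ≤ n) :
    ∀ i : ℤ, 0 ≤ i → i ≤ (n : ℤ) - 1 → d n i = - d n ((n : ℤ) - 1 - i) := by
  intro i _ _
  have key : d n ((n : ℤ) - 1 - i) = - d n i := by
    unfold d
    rw [← Finset.sum_neg_distrib]
    refine Finset.sum_congr rfl fun k _ => ?_
    rw [r_flip]
    push_cast
    ring
  linarith
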